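/- (Theorem 1 for kNN) Let X be a metric space, c ≥ 2, k a natural number, ρ : X × Fin c → ℕ injective, D a multiset over X × Fin c, and x : X. Let a := kNN_k(D,x), s_l := s_l(N_k(D,x)), and let b be the largest label among those l ≠ a attaining the maximum of s_l over l ≠ a. Then for every multiset D* over X × Fin c with S(D,D*) ≤ ⌈(s_a − s_b + 𝟙(b < a))/2⌉ − 1 (an inequality of integers), kNN_k(D*,x) = a. -/

import Mathlib

/-- Poisoning size between two multisets: `max (card A) (card B) - card (A ∩ B)`. -/
noncomputable def pSize {α : Type*} (A B : Multiset α) : ℕ :=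
  haveI := Classical.decEq α
  max A.card B.card - (A ∩ B).card

/-- Number of votes for label `l` in a multiset of labeled examples (counted with
multiplicity). -/
def votes {X : Type*} {c : ℕ} (T : Multiset (X × Fin c)) (l : Fin c) : ℕ :=
  T.countP (fun p => p.2 = l)

/-- Tie-broken majority label: the largest label (in the order of `Fin c`) among the
labels attaining the maximum vote count. -/
noncomputable def majLabel {X : Type*} {c : ℕ} (hc : 0 < c) (T : Multiset (X × Fin c)) :
    Fin c :=
  (Finset.univ.filter (fun l : Fin c => ∀ l', votes T l' ≤ votes T l)).max'
    (by
      haveI : NeZero c := ⟨hc.ne'⟩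
      obtain ⟨b, -, hb⟩ := Finset.exists_max_image (Finset.univ : Finset (Fin c)) (votes T)
        Finset.univ_nonempty
      exact ⟨b, Finset.mem_filter.mpr ⟨Finset.mem_univ b, fun l' => hb l' (Finset.mem_univ l')⟩⟩)

/-- The largest label, among those `l ≠ a`, attaining the maximum of `s l` over `l ≠ a`. -/
noncomputable def secondLabel {c : ℕ} (hc : 2 ≤ c) (s : Fin c → ℕ) (a : Fin c) : Fin c :=
  (Finset.univ.filter (fun l : Fin c => l ≠ a ∧ ∀ l', l' ≠ a → s l' ≤ s l)).max'
    (by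
      have h1 : 1 < Fintype.card (Fin c) := by rw [Fintype.card_fin]; omega
      obtain ⟨l0, hl0⟩ := Fintype.exists_ne_of_one_lt_card h1 a
      have hne : (Finset.univ.filter (fun l : Fin c => l ≠ a)).Nonempty :=
        ⟨l0, Finset.mem_filter.mpr ⟨Finset.mem_univ _, hl0⟩⟩
      obtain ⟨b, hb, hbmax⟩ := Finset.exists_max_image _ s hne
      refine ⟨b, Finset.mem_filter.mpr ⟨Finset.mem_univ _, (Finset.mem_filter.mp hb).2, ?_⟩⟩
      intro l' hl'
      exact hbmax l' (Finset.mem_filter.mpr ⟨Finset.mem_univ _, hl'⟩))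

/-- The kNN ordering w.r.t. a test input `x`, with ties broken by the ranking `ρ`
(larger ranks first): `p` precedes `q` iff `dist p.1 x < dist q.1 x`, or
`dist p.1 x = dist q.1 x` and `ρ p ≥ ρ q`. -/
def knnLE {X : Type*} [MetricSpace X] {c : ℕ} (ρ : X × Fin c → ℕ) (x : X)
    (p q : X × Fin c) : Prop :=
  dist p.1 x < dist q.1 x ∨ (dist p.1 x = dist q.1 x ∧ ρ q ≤ ρ p)

/-- kNN neighbor multiset: the first `min k (card D)` elements of `D` in the order
`knnLE ρ x` (sort `D` by this order and take the first `k`). -/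
noncomputable def Nk {X : Type*} [MetricSpace X] {c : ℕ} {ρ : X × Fin c → ℕ}
    (hρ : Function.Injective ρ) (k : ℕ) (D : Multiset (X × Fin c)) (x : X) :
    Multiset (X × Fin c) :=
  haveI : DecidableRel (knnLE ρ x) := Classical.decRel _
  haveI : IsTrans _ (knnLE ρ x) := ⟨by
    rintro p q s (h1 | ⟨h1, h1'⟩) (h2 | ⟨h2, h2'⟩)
    · exact Or.inl (h1.trans h2)
    · exact Or.inl (h1.trans_eq h2)
    · exact Or.inl (h1.trans_lt h2)
    · exact Or.inr ⟨h1.trans h2, h2'.trans h1'⟩⟩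
  haveI : IsAntisymm _ (knnLE ρ x) := ⟨by
    rintro p q (h1 | ⟨h1, h1'⟩) (h2 | ⟨h2, h2'⟩)
    · exact absurd h2 (lt_asymm h1)
    · exact absurd h2.symm h1.ne
    · exact absurd h1.symm h2.ne
    · exact hρ (le_antisymm h2' h1')⟩
  haveI : IsTotal _ (knnLE ρ x) := ⟨by
    intro p q
    rcases lt_trichotomy (dist p.1 x) (dist q.1 x) with h | h | h
    · exact Or.inl (Or.inl h)
    · rcases le_total (ρ q) (ρ p) with h' | h'
      · exact Or.inl (Or.inr ⟨h, h'⟩)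
      · exact Or.inr (Or.inr ⟨h.symm, h'⟩)
    · exact Or.inr (Or.inl h)⟩
  (↑((D.sort (knnLE ρ x)).take k) : Multiset (X × Fin c))

/-- kNN prediction: tie-broken majority label among the kNN neighbors. -/
noncomputable def kNNpred {X : Type*} [MetricSpace X] {c : ℕ} (hc : 0 < c)
    {ρ : X × Fin c → ℕ} (hρ : Function.Injective ρ) (k : ℕ)
    (D : Multiset (X × Fin c)) (x : X) : Fin c :=
  majLabel hc (Nk hρ k D x)

/-!
Poisoning moves the `k` nearest neighbours by at most `m := pSize D D*` points. Both neighbour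
multisets are initial segments of the same linear order, so they cannot each miss a common point
of `D` and `D*` that the other contains (the two points would precede each other). Hence
`N_k(D*) - N_k(D) ≤ D* - D` or `N_k(D) - N_k(D*) ≤ D - D*`; since the cardinalities of these two
differences of neighbour multisets differ by `min k |D*| - min k |D|`, at most `m` neighbours are
new either way, so every vote count moves by at most `m`.

Compare labels by `(votes, label)` lexicographically: the prediction is the maximum, and `b`
dominates every label other than `a`. The certificate says `2 m < s_a - s_b + 𝟙(b < a)`, which
keeps `a` strictly ahead of all other labels after poisoning.
-/

open Multiset

section PoisoningSize

variable {α : Type*} [DecidableEq α]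

theorem Multiset.card_sub_add_card_eq (A B : Multiset α) :
    (A - B).card + B.card = (B - A).card + A.card := by
  rw [← card_add, ← card_add, ← union_def, ← union_def, union_comm]

theorem pSize_eq_max_card_sub (A B : Multiset α) :
    pSize A B = max (A - B).card (B - A).card := by
  have hA := congrArg card (sub_add_inter A B)
  have hB := congrArg card (sub_add_inter B A)
  rw [card_add] at hA hB
  rw [inter_comm] at hB
  rw [pSize, Subsingleton.elim (Classical.decEq α) ‹_›]
  omega

end PoisoningSize

theorem pSize_comm {α : Type*} (A B : Multiset α) : pSize A B = pSize B A := by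
  classical
  rw [pSize_eq_max_card_sub, pSize_eq_max_card_sub, max_comm]

section InitialSegments

variable {α : Type*} [DecidableEq α] {r : α → α → Prop}

theorem List.Pairwise.rel_of_mem_take_of_mem_sub_take {l : List α} (hl : l.Pairwise r) {k : ℕ}
    {p q : α} (hp : p ∈ l.take k) (hq : q ∈ (l : Multiset α) - l.take k) : r p q := by
  rw [← List.take_append_drop k l] at hl
  have hsplit : (l : Multiset α) = l.take k + l.drop k := by
    rw [coe_add, List.take_append_drop]
  have hdrop : (l : Multiset α) - l.take k = l.drop k := by
    rw [hsplit, add_tsub_cancel_left]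
  rw [hdrop, mem_coe] at hq
  exact (List.pairwise_append.mp hl).2.2 p hp q hq

theorem Multiset.sub_le_sub_of_inter_le {D D' N N' : Multiset α} (hND' : N' ≤ D')
    (h : N' ∩ D ≤ N) : N' - N ≤ D' - D := by
  rw [le_iff_count] at hND' h ⊢
  intro e
  have h₁ := hND' e
  have h₂ := h e
  rw [count_inter] at h₂
  rw [count_sub, count_sub]
  omega

theorem Multiset.inter_le_or_inter_le_of_closed [Std.Antisymm r] {D D' N N' : Multiset α}
    (hN : ∀ p ∈ N, ∀ q ∈ D - N, r p q) (hN' : ∀ p ∈ N', ∀ q ∈ D' - N', r p q) :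
    N' ∩ D ≤ N ∨ N ∩ D' ≤ N' := by
  by_contra! hcon
  obtain ⟨h, h'⟩ := hcon
  simp only [le_iff_count, not_forall, not_le, count_inter] at h h'
  obtain ⟨e, he⟩ := h
  obtain ⟨f, hf⟩ := h'
  have hfe : r f e := hN f (count_pos.mp (by omega)) e (count_pos.mp (by rw [count_sub]; omega))
  have hef : r e f := hN' e (count_pos.mp (by omega)) f (count_pos.mp (by rw [count_sub]; omega))
  obtain rfl := antisymm hef hfe
  omega

theorem Multiset.card_sub_le_pSize_of_closed [Std.Antisymm r] {k : ℕ} {D D' N N' : Multiset α}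
    (hND : N ≤ D) (hND' : N' ≤ D') (hcard : N.card = min k D.card)
    (hcard' : N'.card = min k D'.card)
    (hN : ∀ p ∈ N, ∀ q ∈ D - N, r p q) (hN' : ∀ p ∈ N', ∀ q ∈ D' - N', r p q) :
    (N' - N).card ≤ pSize D D' := by
  rw [pSize_eq_max_card_sub]
  rcases inter_le_or_inter_le_of_closed hN hN' with h | h
  · exact (card_le_card (sub_le_sub_of_inter_le hND' h)).trans (le_max_right _ _)
  · have := card_le_card (sub_le_sub_of_inter_le hND h)
    have := card_sub_add_card_eq N' N
    have := card_sub_add_card_eq D D'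
    omega

end InitialSegments

section NearestNeighbors

variable {X : Type*} [MetricSpace X] {c : ℕ} {ρ : X × Fin c → ℕ} (x : X)

instance knnLE_isTrans : IsTrans (X × Fin c) (knnLE ρ x) := ⟨by
  rintro p q s (h1 | ⟨h1, h1'⟩) (h2 | ⟨h2, h2'⟩)
  · exact Or.inl (h1.trans h2)
  · exact Or.inl (h1.trans_eq h2)
  · exact Or.inl (h1.trans_lt h2)
  · exact Or.inr ⟨h1.trans h2, h2'.trans h1'⟩⟩

instance knnLE_total : Std.Total (knnLE ρ x) := ⟨by
  intro p q
  rcases lt_trichotomy (dist p.1 x) (dist q.1 x) with h | h | h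
  · exact Or.inl (Or.inl h)
  · rcases le_total (ρ q) (ρ p) with h' | h'
    · exact Or.inl (Or.inr ⟨h, h'⟩)
    · exact Or.inr (Or.inr ⟨h.symm, h'⟩)
  · exact Or.inr (Or.inl h)⟩

theorem knnLE_antisymm (hρ : Function.Injective ρ) : Std.Antisymm (knnLE ρ x) := ⟨by
  rintro p q (h1 | ⟨h1, h1'⟩) (h2 | ⟨h2, h2'⟩)
  · exact absurd h2 (lt_asymm h1)
  · exact absurd h2.symm h1.ne
  · exact absurd h1.symm h2.ne
  · exact hρ (le_antisymm h2' h1')⟩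

variable (hρ : Function.Injective ρ) (k : ℕ)

theorem exists_pairwise_Nk_eq_take (D : Multiset (X × Fin c)) :
    ∃ l : List (X × Fin c), l.Pairwise (knnLE ρ x) ∧ (l : Multiset (X × Fin c)) = D ∧
      Nk hρ k D x = l.take k := by
  have := knnLE_antisymm x hρ
  let : DecidableRel (knnLE ρ x) := Classical.decRel _
  exact ⟨D.sort (knnLE ρ x), pairwise_sort _ _, sort_eq _ _, rfl⟩

theorem Nk_le (D : Multiset (X × Fin c)) : Nk hρ k D x ≤ D := by
  obtain ⟨l, -, rfl, hN⟩ := exists_pairwise_Nk_eq_take x hρ k D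
  rw [hN]
  exact (List.take_sublist k l).subperm

theorem card_Nk (D : Multiset (X × Fin c)) : (Nk hρ k D x).card = min k D.card := by
  obtain ⟨l, -, rfl, hN⟩ := exists_pairwise_Nk_eq_take x hρ k D
  rw [hN, coe_card, coe_card, List.length_take]

theorem knnLE_of_mem_Nk_of_mem_sub [DecidableEq (X × Fin c)] {D : Multiset (X × Fin c)}
    {p q : X × Fin c} (hp : p ∈ Nk hρ k D x) (hq : q ∈ D - Nk hρ k D x) : knnLE ρ x p q := by
  obtain ⟨l, hl, rfl, hN⟩ := exists_pairwise_Nk_eq_take x hρ k D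
  rw [hN, mem_coe] at hp
  rw [hN] at hq
  exact hl.rel_of_mem_take_of_mem_sub_take hp hq

theorem votes_Nk_le_add_pSize (D D' : Multiset (X × Fin c)) (l : Fin c) :
    votes (Nk hρ k D' x) l ≤ votes (Nk hρ k D x) l + pSize D D' := by
  classical
  have := knnLE_antisymm x hρ
  have hexchange : (Nk hρ k D' x - Nk hρ k D x).card ≤ pSize D D' :=
    card_sub_le_pSize_of_closed (Nk_le x hρ k D) (Nk_le x hρ k D') (card_Nk x hρ k D)
      (card_Nk x hρ k D') (fun _ hp _ hq => knnLE_of_mem_Nk_of_mem_sub x hρ k hp hq)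
      (fun _ hp _ hq => knnLE_of_mem_Nk_of_mem_sub x hρ k hp hq)
  calc votes (Nk hρ k D' x) l
      ≤ (Nk hρ k D' x - Nk hρ k D x + Nk hρ k D x).countP (fun p => p.2 = l) :=
        countP_le_of_le _ Multiset.le_sub_add
    _ ≤ (Nk hρ k D' x - Nk hρ k D x).card + votes (Nk hρ k D x) l := by
        rw [countP_add]
        exact Nat.add_le_add_right (countP_le_card _ _) _
    _ ≤ votes (Nk hρ k D x) l + pSize D D' := by omega

end NearestNeighbors

section Labels

variable {c : ℕ}

theorem majLabel_eq_of_forall_toLex_lt {X : Type*} (hc : 0 < c) (T : Multiset (X × Fin c))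
    (a : Fin c) (h : ∀ l ≠ a, toLex (votes T l, l) < toLex (votes T a, a)) :
    majLabel hc T = a := by
  by_contra hne
  have hmax : ∀ l, votes T l ≤ votes T (majLabel hc T) := by
    unfold majLabel
    exact (Finset.mem_filter.mp (Finset.max'_mem
      (Finset.univ.filter fun l : Fin c => ∀ l', votes T l' ≤ votes T l) _)).2
  rcases Prod.Lex.toLex_lt_toLex.1 (h _ hne) with hlt | ⟨heq, hlt⟩
  · exact (hmax a).not_gt hlt
  · dsimp only at heq hlt
    refine hlt.not_ge (Finset.le_max' _ _ (Finset.mem_filter.mpr ⟨Finset.mem_univ _, ?_⟩))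
    exact fun l => heq ▸ hmax l

theorem toLex_le_secondLabel (hc : 2 ≤ c) (s : Fin c → ℕ) (a : Fin c) {l : Fin c}
    (hl : l ≠ a) :
    toLex (s l, l) ≤ toLex (s (secondLabel hc s a), secondLabel hc s a) := by
  have hmax : ∀ l ≠ a, s l ≤ s (secondLabel hc s a) := by
    unfold secondLabel
    exact (Finset.mem_filter.mp (Finset.max'_mem
      (Finset.univ.filter fun l : Fin c => l ≠ a ∧ ∀ l', l' ≠ a → s l' ≤ s l) _)).2.2
  rw [Prod.Lex.toLex_le_toLex]
  rcases (hmax l hl).lt_or_eq with hlt | heq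
  · exact Or.inl hlt
  · refine Or.inr ⟨heq, Finset.le_max' _ _ (Finset.mem_filter.mpr ⟨Finset.mem_univ _, hl, ?_⟩)⟩
    exact fun l' hl' => heq ▸ hmax l' hl'

theorem toLex_lt_of_vote_gap {ι : Type*} [LinearOrder ι] {s s' : ι → ℕ} {a b : ι} {m : ℕ}
    (hb : ∀ l ≠ a, toLex (s l, l) ≤ toLex (s b, b))
    (hgap : 2 * (m : ℤ) < s a - s b + if b < a then 1 else 0)
    (hup : ∀ l, s' l ≤ s l + m) (hdown : s a ≤ s' a + m) {l : ι} (hl : l ≠ a) :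
    toLex (s' l, l) < toLex (s' a, a) := by
  have hl' := hup l
  rw [Prod.Lex.toLex_lt_toLex]
  rcases Prod.Lex.toLex_le_toLex.1 (hb l hl) with hlb | ⟨hlb, hlb'⟩
  · left
    split_ifs at hgap <;> omega
  · split_ifs at hgap with hba
    · rcases (show s' l < s' a ∨ s' l = s' a by omega) with h | h
      · exact Or.inl h
      · exact Or.inr ⟨h, hlb'.trans_lt hba⟩
    · left
      omega

theorem le_ceil_half_sub_one_iff (m g : ℤ) : m ≤ ⌈(g : ℚ) / 2⌉ - 1 ↔ 2 * m < g := by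
  rw [Int.le_sub_one_iff, Int.lt_ceil, lt_div_iff₀ two_pos, mul_comm]
  norm_cast

end Labels

/-- Theorem 1 for kNN: if the poisoning size is at most
`⌈(s_a − s_b + 𝟙(b < a))/2⌉ − 1`, the kNN prediction for `x` is unchanged. -/
theorem knn_certified_prediction {X : Type*} [MetricSpace X] {c : ℕ} (hc : 2 ≤ c)
    (k : ℕ) {ρ : X × Fin c → ℕ} (hρ : Function.Injective ρ)
    (D : Multiset (X × Fin c)) (x : X) (a b : Fin c)
    (hb : b = secondLabel hc (fun l => votes (Nk hρ k D x) l) a)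
    (Dstar : Multiset (X × Fin c))
    (h : (pSize D Dstar : ℤ) ≤
      ⌈(((votes (Nk hρ k D x) a : ℤ) - (votes (Nk hρ k D x) b : ℤ) +
          if b < a then 1 else 0 : ℤ) : ℚ) / 2⌉ - 1) :
    kNNpred (by omega : 0 < c) hρ k Dstar x = a := by
  have hgap := (le_ceil_half_sub_one_iff _ _).1 h
  refine majLabel_eq_of_forall_toLex_lt _ _ _ fun l hl => ?_
  subst hb
  exact toLex_lt_of_vote_gap (fun _ => toLex_le_secondLabel hc _ a) hgap
    (votes_Nk_le_add_pSize x hρ k D Dstar)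
    (pSize_comm Dstar D ▸ votes_Nk_le_add_pSize x hρ k Dstar D a) hl
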